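/- arXiv:2104.13006 — 4 statements merged into one kernel-verified Lean document; each statement's English description precedes it below -/
import Mathlib

section
/- For every α ∈ [0,∞], there exists an irrational number x ∈ (0,1) whose Engel digit sequence (d_n(x)) has exponent of convergence λ(x) = inf{s ≥ 0 : Σ_{n≥1} d_n(x)^{-s} < ∞} equal to α. -/
/-!
Every nondecreasing sequence of integers `aₙ ≥ 2` tending to infinity is the Engel digit sequence
of `x = ∑ₙ 1 / (a₀ ⋯ aₙ)`: from `x = (1 + x') / a₀`, where `x'` is the series of the shifted
sequence, one gets `1 / a₀ < x < 1 / (a₀ - 1)`, hence `d₁(x) = a₀` and `T(x) = x'`. Such an `x`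
is irrational, since the Engel expansion of a rational number terminates. So it suffices to
choose digits with exponent of convergence `α`: `2ⁿ⁺¹` for `α = 0`, `⌈(n + 1)^(1/α)⌉ + 1` for
`0 < α < ∞`, and `⌈log (n + 1)⌉ + 2` for `α = ∞`.
-/

open Filter MeasureTheory Set
open scoped ENNReal NNReal

/-- The Engel series map `T(x) = x⌈1/x⌉ - 1`, with `T(0) = 0`. -/
noncomputable def engelT (x : ℝ) : ℝ := if x = 0 then 0 else x * (⌈x⁻¹⌉ : ℝ) - 1

/-- The `n`-th Engel digit `d_n(x) = ⌈1/(T^{n-1} x)⌉` (for `n ≥ 1`);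
it equals `0` when the Engel expansion of `x` has terminated. -/
noncomputable def engelDigit (n : ℕ) (x : ℝ) : ℕ := ⌈(engelT^[n - 1] x)⁻¹⌉₊

/-- The exponent of convergence `λ(x) = inf {s ≥ 0 : Σ_{n≥1} d_n(x)^{-s} < ∞}`,
 valued in `[0,∞]` (with `inf ∅ = ∞`). -/
noncomputable def engelLambda (x : ℝ) : ℝ≥0∞ :=
  sInf (ENNReal.ofReal ''
    {s : ℝ | 0 ≤ s ∧ Summable fun n : ℕ => ((engelDigit (n + 1) x : ℝ)) ^ (-s)})

/-- `D(x) = liminf_n (log d_n(x))/(log n)`, valued in `[0,∞]`. -/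
noncomputable def engelDexp (x : ℝ) : ℝ≥0∞ :=
  Filter.liminf (fun n : ℕ =>
    ENNReal.ofReal (Real.log (engelDigit n x) / Real.log n)) Filter.atTop

structure IsEngelDigitSeq (a : ℕ → ℕ) : Prop where
  two_le : ∀ n, 2 ≤ a n
  monotone : Monotone a
  tendsto_atTop : Tendsto a atTop atTop

noncomputable def engelTerm (a : ℕ → ℕ) (n : ℕ) : ℝ := ∏ k ∈ Finset.range (n + 1), (a k : ℝ)⁻¹

noncomputable def engelSeries (a : ℕ → ℕ) : ℝ := ∑' n, engelTerm a n

namespace IsEngelDigitSeq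

variable {a : ℕ → ℕ}

lemma shift (ha : IsEngelDigitSeq a) (m : ℕ) : IsEngelDigitSeq (fun n => a (n + m)) where
  two_le _ := ha.two_le _
  monotone _ _ hij := ha.monotone (by omega)
  tendsto_atTop := ha.tendsto_atTop.comp (tendsto_add_atTop_nat m)

lemma one_lt (ha : IsEngelDigitSeq a) (n : ℕ) : (1 : ℝ) < a n :=
  Nat.one_lt_cast.2 (ha.two_le n)

lemma engelTerm_pos (ha : IsEngelDigitSeq a) (n : ℕ) : 0 < engelTerm a n :=
  Finset.prod_pos fun k _ => inv_pos.2 (zero_lt_one.trans (ha.one_lt k))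

lemma engelTerm_le (ha : IsEngelDigitSeq a) (n : ℕ) :
    engelTerm a n ≤ (a 0 : ℝ)⁻¹ ^ n * (a n : ℝ)⁻¹ := by
  have hpos k : (0 : ℝ) < a k := zero_lt_one.trans (ha.one_lt k)
  rw [engelTerm, Finset.prod_range_succ]
  gcongr
  calc ∏ k ∈ Finset.range n, (a k : ℝ)⁻¹ ≤ ∏ _k ∈ Finset.range n, (a 0 : ℝ)⁻¹ :=
        Finset.prod_le_prod (fun k _ => (inv_pos.2 (hpos k)).le)
          fun k _ => inv_anti₀ (hpos 0) (by exact_mod_cast ha.monotone (Nat.zero_le k))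
    _ = (a 0 : ℝ)⁻¹ ^ n := by rw [Finset.prod_const, Finset.card_range]

lemma engelTerm_le_pow (ha : IsEngelDigitSeq a) (n : ℕ) :
    engelTerm a n ≤ (a 0 : ℝ)⁻¹ ^ (n + 1) := by
  refine (ha.engelTerm_le n).trans ?_
  rw [pow_succ]
  gcongr
  · exact zero_lt_one.trans (ha.one_lt 0)
  · exact_mod_cast ha.monotone (Nat.zero_le n)

lemma engelTerm_lt_pow (ha : IsEngelDigitSeq a) {n : ℕ} (hn : a 0 < a n) :
    engelTerm a n < (a 0 : ℝ)⁻¹ ^ (n + 1) := by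
  have h0 : (0 : ℝ) < a 0 := zero_lt_one.trans (ha.one_lt 0)
  refine (ha.engelTerm_le n).trans_lt ?_
  rw [pow_succ]
  exact mul_lt_mul_of_pos_left (inv_strictAnti₀ h0 (by exact_mod_cast hn)) (by positivity)

lemma summable_inv_pow_succ (ha : IsEngelDigitSeq a) :
    Summable fun n : ℕ => (a 0 : ℝ)⁻¹ ^ (n + 1) :=
  (summable_nat_add_iff 1).2 <| summable_geometric_of_lt_one (inv_nonneg.2 (by positivity))
    (inv_lt_one_of_one_lt₀ (ha.one_lt 0))

lemma summable_engelTerm (ha : IsEngelDigitSeq a) : Summable (engelTerm a) :=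
  .of_nonneg_of_le (fun n => (ha.engelTerm_pos n).le) ha.engelTerm_le_pow ha.summable_inv_pow_succ

lemma engelSeries_pos (ha : IsEngelDigitSeq a) : 0 < engelSeries a :=
  ha.summable_engelTerm.tsum_pos (fun n => (ha.engelTerm_pos n).le) 0 (ha.engelTerm_pos 0)

lemma engelSeries_lt (ha : IsEngelDigitSeq a) : engelSeries a < ((a 0 : ℝ) - 1)⁻¹ := by
  obtain ⟨N, hN⟩ := (ha.tendsto_atTop.eventually_gt_atTop (a 0)).exists
  have h1 := ha.one_lt 0
  calc engelSeries a < ∑' n : ℕ, (a 0 : ℝ)⁻¹ ^ (n + 1) :=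
        Summable.tsum_lt_tsum_of_nonneg (fun n => (ha.engelTerm_pos n).le) ha.engelTerm_le_pow
          (ha.engelTerm_lt_pow hN) ha.summable_inv_pow_succ
    _ = (a 0 : ℝ)⁻¹ * (1 - (a 0 : ℝ)⁻¹)⁻¹ := by
        rw [← tsum_geometric_of_lt_one (inv_nonneg.2 (by positivity))
          (inv_lt_one_of_one_lt₀ h1), ← tsum_mul_left]
        simp_rw [pow_succ']
    _ = ((a 0 : ℝ) - 1)⁻¹ := by
        field_simp [(sub_pos.2 h1).ne']

lemma engelSeries_eq (ha : IsEngelDigitSeq a) :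
    engelSeries a = (a 0 : ℝ)⁻¹ * (1 + engelSeries fun n => a (n + 1)) := by
  have hterm n : engelTerm a (n + 1) = (a 0 : ℝ)⁻¹ * engelTerm (fun n => a (n + 1)) n := by
    rw [engelTerm, Finset.prod_range_succ', mul_comm]
    rfl
  rw [engelSeries, ha.summable_engelTerm.tsum_eq_zero_add]
  simp_rw [hterm, tsum_mul_left]
  simp [engelTerm, engelSeries, mul_add]

lemma natCeil_inv_engelSeries (ha : IsEngelDigitSeq a) : ⌈(engelSeries a)⁻¹⌉₊ = a 0 := by
  have hx := ha.engelSeries_pos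
  have h1 := ha.one_lt 0
  have h2 := ha.two_le 0
  have hlow : (a 0 : ℝ)⁻¹ < engelSeries a := by
    have := (ha.shift 1).engelSeries_pos
    rw [ha.engelSeries_eq]
    exact lt_mul_of_one_lt_right (by positivity) (by linarith)
  have hupp := ha.engelSeries_lt
  rw [← inv_lt_inv₀ hx (by positivity), inv_inv] at hlow
  rw [lt_inv_comm₀ hx (by linarith)] at hupp
  rw [Nat.ceil_eq_iff (by omega), Nat.cast_pred (by omega)]
  exact ⟨by linarith, hlow.le⟩

lemma engelT_engelSeries (ha : IsEngelDigitSeq a) :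
    engelT (engelSeries a) = engelSeries fun n => a (n + 1) := by
  have hx := ha.engelSeries_pos
  have hceil : ((⌈(engelSeries a)⁻¹⌉ : ℤ) : ℝ) = a 0 := by
    rw [← natCast_ceil_eq_intCast_ceil (inv_nonneg.2 hx.le), ha.natCeil_inv_engelSeries]
  have h0 : (a 0 : ℝ) ≠ 0 := (zero_lt_one.trans (ha.one_lt 0)).ne'
  rw [engelT, if_neg hx.ne', hceil, ha.engelSeries_eq]
  field_simp
  ring

lemma iterate_engelT_engelSeries (ha : IsEngelDigitSeq a) (m : ℕ) :
    engelT^[m] (engelSeries a) = engelSeries fun n => a (n + m) := by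
  induction m with
  | zero => rfl
  | succ m ih =>
    rw [Function.iterate_succ_apply', ih, (ha.shift m).engelT_engelSeries]
    simp only [Nat.add_right_comm _ 1 m, Nat.add_assoc]

lemma engelDigit_succ_engelSeries (ha : IsEngelDigitSeq a) (n : ℕ) :
    engelDigit (n + 1) (engelSeries a) = a n := by
  rw [engelDigit, Nat.add_sub_cancel, ha.iterate_engelT_engelSeries,
    (ha.shift n).natCeil_inv_engelSeries, zero_add]

lemma engelSeries_mem_Ioo (ha : IsEngelDigitSeq a) : engelSeries a ∈ Ioo (0 : ℝ) 1 := by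
  refine ⟨ha.engelSeries_pos, ha.engelSeries_lt.trans_le (inv_le_one_of_one_le₀ ?_)⟩
  have : (2 : ℝ) ≤ a 0 := by exact_mod_cast ha.two_le 0
  linarith

end IsEngelDigitSeq

lemma engelT_lt_self {x : ℝ} (hx : 0 < x) : engelT x < x := by
  rw [engelT, if_neg hx.ne']
  calc x * ⌈x⁻¹⌉ - 1 < x * (x⁻¹ + 1) - 1 := by gcongr; exact Int.ceil_lt_add_one _
    _ = x := by field_simp; ring

lemma exists_intCast_eq_mul_engelT {x : ℝ} {d z : ℤ} (hz : (z : ℝ) = d * x) :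
    ∃ z' : ℤ, (z' : ℝ) = d * engelT x := by
  rcases eq_or_ne x 0 with rfl | hx
  · exact ⟨0, by simp [engelT]⟩
  · exact ⟨z * ⌈x⁻¹⌉ - d, by rw [engelT, if_neg hx]; push_cast; rw [hz]; ring⟩

/-- The Engel expansion of a rational number terminates: if `q x ∈ ℤ` then `q T(x) ∈ ℤ`, and
`T(x) < x`, so `q Tⁿ(x)` cannot stay a positive integer forever. -/
lemma irrational_of_forall_iterate_engelT_pos {x : ℝ} (hx : ∀ n, 0 < engelT^[n] x) :
    Irrational x := by
  rintro ⟨q, rfl⟩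
  have hint n : ∃ z : ℤ, (z : ℝ) = q.den * engelT^[n] q := by
    induction n with
    | zero =>
      refine ⟨q.num, ?_⟩
      rw [Function.iterate_zero_apply]
      exact_mod_cast (Rat.den_mul_eq_num q).symm
    | succ n ih =>
      obtain ⟨z, hz⟩ := ih
      rw [Function.iterate_succ_apply']
      exact exists_intCast_eq_mul_engelT (d := q.den) (by exact_mod_cast hz)
  choose z hz using hint
  have hden : (0 : ℝ) < q.den := by exact_mod_cast q.den_pos
  have hpos n : 0 < z n := by
    have := mul_pos hden (hx n)
    rw [← hz] at this
    exact_mod_cast this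
  have hdec n : z (n + 1) < z n := by
    have := mul_lt_mul_of_pos_left (engelT_lt_self (hx n)) hden
    rw [← Function.iterate_succ_apply' engelT, ← hz, ← hz] at this
    exact_mod_cast this
  have hbound n : z n + n ≤ z 0 := by
    induction n with
    | zero => simp
    | succ n ih => have := hdec n; push_cast; omega
  have := hbound (z 0).toNat
  have := hpos (z 0).toNat
  omega

lemma IsEngelDigitSeq.irrational_engelSeries {a : ℕ → ℕ} (ha : IsEngelDigitSeq a) :
    Irrational (engelSeries a) :=
  irrational_of_forall_iterate_engelT_pos fun n => by
    rw [ha.iterate_engelT_engelSeries]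
    exact (ha.shift n).engelSeries_pos

noncomputable def convergenceExponent (a : ℕ → ℕ) : ℝ≥0∞ :=
  sInf (ENNReal.ofReal '' {s : ℝ | 0 ≤ s ∧ Summable fun n => (a n : ℝ) ^ (-s)})

lemma IsEngelDigitSeq.engelLambda_engelSeries {a : ℕ → ℕ} (ha : IsEngelDigitSeq a) :
    engelLambda (engelSeries a) = convergenceExponent a := by
  simp only [engelLambda, convergenceExponent, ha.engelDigit_succ_engelSeries]

lemma convergenceExponent_eq_ofReal {a : ℕ → ℕ} {t : ℝ} (ht : 0 ≤ t)
    (h : ∀ s : ℝ, 0 ≤ s → (Summable (fun n => (a n : ℝ) ^ (-s)) ↔ t < s)) :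
    convergenceExponent a = ENNReal.ofReal t := by
  have hset : {s : ℝ | 0 ≤ s ∧ Summable fun n => (a n : ℝ) ^ (-s)} = Ioi t := by
    ext s
    exact ⟨fun ⟨hs, hsum⟩ => (h s hs).1 hsum,
      fun hts => ⟨ht.trans hts.le, (h s (ht.trans hts.le)).2 hts⟩⟩
  rw [convergenceExponent, hset, ← ENNReal.ofReal_mono.map_csInf_of_continuousAt
    ENNReal.continuous_ofReal.continuousAt nonempty_Ioi bddBelow_Ioi, csInf_Ioi]

lemma convergenceExponent_eq_top {a : ℕ → ℕ}
    (h : ∀ s : ℝ, 0 ≤ s → ¬Summable fun n => (a n : ℝ) ^ (-s)) : convergenceExponent a = ⊤ := by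
  rw [convergenceExponent, sInf_eq_top]
  rintro _ ⟨s, ⟨hs, hsum⟩, rfl⟩
  exact absurd hsum (h s hs)

/-- Comparison with the harmonic series. -/
lemma not_summable_rpow_neg_of_rpow_le {b : ℕ → ℝ} {s C : ℝ} (hb : ∀ n, 0 < b n)
    (h : ∀ n, b n ^ s ≤ C * (n + 1)) : ¬Summable fun n => b n ^ (-s) := by
  intro hsum
  have hharm : Summable fun n : ℕ => ((n + 1 : ℕ) : ℝ)⁻¹ := by
    refine .of_nonneg_of_le (fun n => by positivity) (fun n => ?_) (hsum.mul_left C)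
    rw [Real.rpow_neg (hb n).le, ← div_eq_mul_inv, le_div_iff₀ (Real.rpow_pos_of_pos (hb n) s)]
    push_cast
    rw [inv_mul_eq_div, div_le_iff₀ (by positivity)]
    exact h n
  exact Real.not_summable_natCast_inv ((summable_nat_add_iff 1).1 hharm)

lemma isEngelDigitSeq_two_pow_succ : IsEngelDigitSeq fun n => 2 ^ (n + 1) where
  two_le n := Nat.le_self_pow (Nat.succ_ne_zero n) 2
  monotone _ _ hij := Nat.pow_le_pow_right two_pos (by omega)
  tendsto_atTop := tendsto_atTop_mono (fun _ => Nat.lt_two_pow_self.le) (tendsto_add_atTop_nat 1)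

lemma summable_two_pow_succ_rpow_neg_iff {s : ℝ} :
    Summable (fun n : ℕ => ((2 ^ (n + 1) : ℕ) : ℝ) ^ (-s)) ↔ 0 < s := by
  have hterm n : ((2 ^ (n + 1) : ℕ) : ℝ) ^ (-s) = ((2 : ℝ) ^ (-s)) ^ (n + 1) := by
    push_cast
    rw [← Real.rpow_natCast, ← Real.rpow_natCast, ← Real.rpow_mul two_pos.le,
      ← Real.rpow_mul two_pos.le, mul_comm]
  simp_rw [hterm, summable_nat_add_iff 1 (f := fun n => ((2 : ℝ) ^ (-s)) ^ n),
    summable_geometric_iff_norm_lt_one, Real.norm_eq_abs,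
    abs_of_pos (Real.rpow_pos_of_pos two_pos _), Real.rpow_lt_one_iff_of_pos two_pos]
  constructor
  · rintro (⟨-, h⟩ | ⟨h, -⟩) <;> linarith
  · exact fun h => Or.inl ⟨one_lt_two, by linarith⟩

noncomputable def rpowDigits (t : ℝ) (n : ℕ) : ℕ := ⌈((n : ℝ) + 1) ^ t⁻¹⌉₊ + 1

section rpowDigits

variable {t : ℝ}

lemma isEngelDigitSeq_rpowDigits (ht : 0 < t) : IsEngelDigitSeq (rpowDigits t) where
  two_le n := by
    have : 0 < ⌈((n : ℝ) + 1) ^ t⁻¹⌉₊ := Nat.ceil_pos.2 (by positivity)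
    unfold rpowDigits
    omega
  monotone i j hij := by
    unfold rpowDigits
    gcongr
  tendsto_atTop := (tendsto_add_atTop_nat 1).comp <| tendsto_nat_ceil_atTop.comp <|
    (tendsto_rpow_atTop (inv_pos.2 ht)).comp <|
      tendsto_atTop_add_const_right _ 1 tendsto_natCast_atTop_atTop

lemma rpow_le_rpowDigits (n : ℕ) : ((n : ℝ) + 1) ^ t⁻¹ ≤ rpowDigits t n := by
  unfold rpowDigits
  push_cast
  linarith [Nat.le_ceil (((n : ℝ) + 1) ^ t⁻¹)]

lemma rpowDigits_le (ht : 0 < t) (n : ℕ) : (rpowDigits t n : ℝ) ≤ 3 * ((n : ℝ) + 1) ^ t⁻¹ := by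
  have h1 : 1 ≤ ((n : ℝ) + 1) ^ t⁻¹ := Real.one_le_rpow (by linarith [n.cast_nonneg (α := ℝ)])
    (inv_pos.2 ht).le
  unfold rpowDigits
  push_cast
  linarith [Nat.ceil_lt_add_one (zero_le_one.trans h1)]

lemma summable_rpowDigits_rpow_neg_iff (ht : 0 < t) {s : ℝ} (hs : 0 ≤ s) :
    Summable (fun n => (rpowDigits t n : ℝ) ^ (-s)) ↔ t < s := by
  have hbase (n : ℕ) : (0 : ℝ) < (n : ℝ) + 1 := by positivity
  have hpos (n : ℕ) : (0 : ℝ) < rpowDigits t n :=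
    (Real.rpow_pos_of_pos (hbase n) _).trans_le (rpow_le_rpowDigits n)
  constructor
  · refine fun hsum => not_le.1 fun hst => not_summable_rpow_neg_of_rpow_le hpos (C := 3 ^ s)
      (fun n => ?_) hsum
    calc (rpowDigits t n : ℝ) ^ s ≤ (3 * ((n : ℝ) + 1) ^ t⁻¹) ^ s :=
          Real.rpow_le_rpow (hpos n).le (rpowDigits_le ht n) hs
      _ = 3 ^ s * ((n : ℝ) + 1) ^ (t⁻¹ * s) := by
          rw [Real.mul_rpow (by norm_num) (by positivity), Real.rpow_mul (hbase n).le]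
      _ ≤ 3 ^ s * ((n : ℝ) + 1) := by
          gcongr
          refine Real.rpow_le_self_of_one_le (by linarith [n.cast_nonneg (α := ℝ)]) ?_
          rw [inv_mul_le_iff₀ ht, mul_one]
          exact hst
  · intro hts
    refine .of_nonneg_of_le (fun n => by positivity) (fun n => ?_)
      ((Real.summable_one_div_nat_add_rpow 1 (t⁻¹ * s)).2 (by rwa [lt_inv_mul_iff₀ ht, mul_one]))
    rw [abs_of_pos (hbase n), one_div, ← Real.rpow_neg (hbase n).le, neg_mul_eq_mul_neg,
      Real.rpow_mul (hbase n).le]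
    exact Real.rpow_le_rpow_of_nonpos (by positivity) (rpow_le_rpowDigits n) (by linarith)

end rpowDigits

noncomputable def logDigits (n : ℕ) : ℕ := ⌈Real.log ((n : ℝ) + 1)⌉₊ + 2

lemma isEngelDigitSeq_logDigits : IsEngelDigitSeq logDigits where
  two_le n := by unfold logDigits; omega
  monotone i j hij := by
    unfold logDigits
    gcongr
  tendsto_atTop := (tendsto_add_atTop_nat 2).comp <| tendsto_nat_ceil_atTop.comp <|
    Real.tendsto_log_atTop.comp <| tendsto_atTop_add_const_right _ 1 tendsto_natCast_atTop_atTop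

lemma logDigits_rpow_le {s : ℝ} (hs : 0 ≤ s) (n : ℕ) :
    (logDigits n : ℝ) ^ s ≤ (s + 4) ^ s * ((n : ℝ) + 1) := by
  set m : ℝ := (n : ℝ) + 1
  set ε : ℝ := (s + 1)⁻¹
  have hm : 1 ≤ m := by linarith [n.cast_nonneg (α := ℝ)]
  have hε : 0 < ε := by positivity
  have hmε : 1 ≤ m ^ ε := Real.one_le_rpow hm hε.le
  have hlog : Real.log m ≤ (s + 1) * m ^ ε := by
    have := Real.log_le_rpow_div (zero_le_one.trans hm) hε
    rwa [div_eq_mul_inv, inv_inv, mul_comm] at this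
  have hdig : (logDigits n : ℝ) ≤ (s + 4) * m ^ ε := by
    have := Nat.ceil_lt_add_one (Real.log_nonneg hm)
    unfold logDigits
    push_cast
    nlinarith
  calc (logDigits n : ℝ) ^ s ≤ ((s + 4) * m ^ ε) ^ s :=
        Real.rpow_le_rpow (by positivity) hdig hs
    _ = (s + 4) ^ s * m ^ (ε * s) := by
        rw [Real.mul_rpow (by positivity) (by positivity), Real.rpow_mul (by positivity)]
    _ ≤ (s + 4) ^ s * m := by
        gcongr
        refine Real.rpow_le_self_of_one_le hm ?_
        rw [inv_mul_le_iff₀ (by positivity), mul_one]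
        linarith

lemma exists_isEngelDigitSeq_convergenceExponent_eq (α : ℝ≥0∞) :
    ∃ a, IsEngelDigitSeq a ∧ convergenceExponent a = α := by
  rcases eq_or_ne α ⊤ with rfl | hα
  · refine ⟨logDigits, isEngelDigitSeq_logDigits, convergenceExponent_eq_top fun s hs => ?_⟩
    exact not_summable_rpow_neg_of_rpow_le (fun n => by unfold logDigits; positivity)
      (logDigits_rpow_le hs)
  rcases eq_or_ne α 0 with rfl | hα₀
  · refine ⟨_, isEngelDigitSeq_two_pow_succ, ?_⟩
    rw [convergenceExponent_eq_ofReal le_rfl fun _ _ => summable_two_pow_succ_rpow_neg_iff,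
      ENNReal.ofReal_zero]
  · have ht : 0 < α.toReal := ENNReal.toReal_pos hα₀ hα
    refine ⟨rpowDigits α.toReal, isEngelDigitSeq_rpowDigits ht, ?_⟩
    rw [convergenceExponent_eq_ofReal ht.le fun s => summable_rpowDigits_rpow_neg_iff ht,
      ENNReal.ofReal_toReal hα]

/-- For every `α ∈ [0,∞]` there is an irrational `x ∈ (0,1)` with `λ(x) = α`. -/
theorem exists_irrational_engelLambda_eq (α : ℝ≥0∞) :
    ∃ x ∈ Set.Ioo (0 : ℝ) 1, Irrational x ∧ engelLambda x = α := by
  obtain ⟨a, ha, hα⟩ := exists_isEngelDigitSeq_convergenceExponent_eq α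
  exact ⟨engelSeries a, ha.engelSeries_mem_Ioo, ha.irrational_engelSeries,
    ha.engelLambda_engelSeries.trans hα⟩
end

section
/- If α = β with α, β > 0, let x = ⟨σ_1, σ_2, …⟩ be the number with Engel digits σ_n = ⌈(n+1)^{1/α}⌉; then x is irrational and λ(x) = α, where λ(x) is the exponent of convergence of the Engel digits of x. -/
open Filter MeasureTheory Set
open scoped ENNReal NNReal

/-!
For an admissible digit sequence `σ`, the tails `t_k = Σ_{n≥0} 1/(σ_k ⋯ σ_{k+n})` satisfy
`σ_k t_k = 1 + t_{k+1}` and `σ_k - 1 < 1/t_k ≤ σ_k`, so the Engel map sends `t_k` to `t_{k+1}`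
and the Engel digits of `x = t_1` are exactly `σ`. If `x = p/q`, then `q t_N` is an integer in
`(0, 1)` once `σ_N > q`.
For `σ_n = ⌈(n+1)^{1/α}⌉` we have `(n+1)^{1/α} ≤ σ_n ≤ 2 (n+1)^{1/α}`, so `Σ σ_n^{-s}` converges
exactly when `s/α > 1`, which gives `λ(x) = α`.
-/

noncomputable def engelTail (σ : ℕ → ℕ) (k : ℕ) : ℝ :=
  ∑' n : ℕ, (∏ i ∈ Finset.range (n + 1), (σ (k + i) : ℝ))⁻¹

structure EngelAdmissible (σ : ℕ → ℕ) : Prop where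
  two_le_one : 2 ≤ σ 1
  monotoneOn : MonotoneOn σ (Ici 1)
  tendsto_atTop : Tendsto σ atTop atTop

namespace EngelAdmissible

variable {σ : ℕ → ℕ} {k : ℕ}

lemma two_le (hσ : EngelAdmissible σ) (hk : 1 ≤ k) : 2 ≤ σ k :=
  hσ.two_le_one.trans (hσ.monotoneOn (mem_Ici.2 le_rfl) hk hk)

lemma two_le_cast (hσ : EngelAdmissible σ) (hk : 1 ≤ k) : (2 : ℝ) ≤ σ k := by
  exact_mod_cast hσ.two_le hk

lemma exists_lt (hσ : EngelAdmissible σ) (m : ℕ) : ∃ n, 1 ≤ n ∧ m < σ n :=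
  ((eventually_ge_atTop 1).and (hσ.tendsto_atTop.eventually_gt_atTop m)).exists

lemma pow_le_prod (hσ : EngelAdmissible σ) (hk : 1 ≤ k) (n : ℕ) :
    (σ k : ℝ) ^ n ≤ ∏ i ∈ Finset.range n, (σ (k + i) : ℝ) := by
  have := Finset.pow_card_le_prod (Finset.range n) (fun i => σ (k + i)) (σ k)
    fun i _ => hσ.monotoneOn hk (mem_Ici.2 (by omega)) (by omega)
  exact_mod_cast (by simpa using this)

lemma tail_term_pos (hσ : EngelAdmissible σ) (hk : 1 ≤ k) (n : ℕ) :
    0 < (∏ i ∈ Finset.range (n + 1), (σ (k + i) : ℝ))⁻¹ :=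
  inv_pos.2 <| Finset.prod_pos fun i _ => by linarith [hσ.two_le_cast (k := k + i) (by omega)]

lemma tail_term_le (hσ : EngelAdmissible σ) (hk : 1 ≤ k) (n : ℕ) :
    (∏ i ∈ Finset.range (n + 1), (σ (k + i) : ℝ))⁻¹ ≤ (σ k : ℝ)⁻¹ ^ (n + 1) := by
  rw [inv_pow]
  exact inv_anti₀ (pow_pos (by linarith [hσ.two_le_cast hk]) _) (hσ.pow_le_prod hk _)

lemma hasSum_inv_pow_succ (hσ : EngelAdmissible σ) (hk : 1 ≤ k) :
    HasSum (fun n : ℕ => (σ k : ℝ)⁻¹ ^ (n + 1)) ((σ k : ℝ) - 1)⁻¹ := by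
  have h2 := hσ.two_le_cast hk
  have := (hasSum_geometric_of_lt_one (r := (σ k : ℝ)⁻¹) (by positivity)
    (inv_lt_one_of_one_lt₀ (by linarith))).mul_left (σ k : ℝ)⁻¹
  simp only [← pow_succ'] at this
  rwa [← mul_inv, mul_sub, mul_one, mul_inv_cancel₀ (by positivity)] at this

lemma summable_engelTail (hσ : EngelAdmissible σ) (hk : 1 ≤ k) :
    Summable fun n : ℕ => (∏ i ∈ Finset.range (n + 1), (σ (k + i) : ℝ))⁻¹ :=
  (hσ.hasSum_inv_pow_succ hk).summable.of_nonneg_of_le (fun n => (hσ.tail_term_pos hk n).le)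
    (hσ.tail_term_le hk)

lemma engelTail_pos (hσ : EngelAdmissible σ) (hk : 1 ≤ k) : 0 < engelTail σ k :=
  (hσ.summable_engelTail hk).tsum_pos (fun n => (hσ.tail_term_pos hk n).le) 0
    (hσ.tail_term_pos hk 0)

lemma inv_le_engelTail (hσ : EngelAdmissible σ) (hk : 1 ≤ k) : (σ k : ℝ)⁻¹ ≤ engelTail σ k := by
  simpa [engelTail] using (hσ.summable_engelTail hk).le_tsum 0 fun n _ => (hσ.tail_term_pos hk n).le

/-- Strict because `σ` is not eventually constant: the comparison with the geometric series
`∑ σ_k^{-(n+1)}` is strict at the first index where `σ` exceeds `σ_k`. -/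
lemma engelTail_lt (hσ : EngelAdmissible σ) (hk : 1 ≤ k) :
    engelTail σ k < ((σ k : ℝ) - 1)⁻¹ := by
  obtain ⟨m, hm1, hm⟩ := hσ.exists_lt (σ k)
  have hkm : k < m := by
    by_contra! h
    exact (hσ.monotoneOn (mem_Ici.2 hm1) (mem_Ici.2 hk) h).not_gt hm
  have hstrict : (∏ i ∈ Finset.range (m - k + 1), (σ (k + i) : ℝ))⁻¹
      < (σ k : ℝ)⁻¹ ^ (m - k + 1) := by
    have hσk : 0 < (σ k : ℝ) := by linarith [hσ.two_le_cast hk]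
    rw [inv_pow]
    refine inv_strictAnti₀ (by positivity) ?_
    rw [Finset.prod_range_succ, pow_succ, Nat.add_sub_cancel' hkm.le]
    exact mul_lt_mul_of_le_of_lt_of_pos_of_nonneg (hσ.pow_le_prod hk _) (by exact_mod_cast hm)
      (by positivity) (by positivity)
  exact (hσ.hasSum_inv_pow_succ hk).tsum_eq ▸
    (hσ.summable_engelTail hk).tsum_lt_tsum (hσ.tail_term_le hk) hstrict
      (hσ.hasSum_inv_pow_succ hk).summable

lemma natCast_mul_engelTail (hσ : EngelAdmissible σ) (hk : 1 ≤ k) :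
    σ k * engelTail σ k = 1 + engelTail σ (k + 1) := by
  have hσk : (σ k : ℝ) ≠ 0 := by linarith [hσ.two_le_cast hk]
  rw [engelTail, (hσ.summable_engelTail hk).tsum_eq_zero_add, mul_add, engelTail,
    ← tsum_mul_left]
  congr 1
  · simp [hσk]
  · refine tsum_congr fun n => ?_
    rw [Finset.prod_range_succ', add_zero, mul_comm _ (σ k : ℝ), mul_inv,
      mul_inv_cancel_left₀ hσk]
    exact congrArg _ (Finset.prod_congr rfl fun i _ => by rw [add_comm i 1, add_assoc])

lemma ceil_inv_engelTail (hσ : EngelAdmissible σ) (hk : 1 ≤ k) :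
    ⌈(engelTail σ k)⁻¹⌉ = σ k := by
  have hpos := hσ.engelTail_pos hk
  have h2 := hσ.two_le_cast hk
  have hlow : (σ k : ℝ) - 1 < (engelTail σ k)⁻¹ :=
    (lt_inv_comm₀ hpos (by linarith)).1 (hσ.engelTail_lt hk)
  have hup : (engelTail σ k)⁻¹ ≤ σ k :=
    (inv_le_comm₀ (by linarith) hpos).1 (hσ.inv_le_engelTail hk)
  rw [Int.ceil_eq_iff]
  push_cast
  exact ⟨by linarith, hup⟩

lemma engelT_engelTail (hσ : EngelAdmissible σ) (hk : 1 ≤ k) :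
    engelT (engelTail σ k) = engelTail σ (k + 1) := by
  rw [engelT, if_neg (hσ.engelTail_pos hk).ne', hσ.ceil_inv_engelTail hk, Int.cast_natCast,
    mul_comm, hσ.natCast_mul_engelTail hk, add_sub_cancel_left]

lemma iterate_engelT_engelTail_one (hσ : EngelAdmissible σ) (n : ℕ) :
    engelT^[n] (engelTail σ 1) = engelTail σ (n + 1) := by
  induction n with
  | zero => rfl
  | succ n ih => rw [Function.iterate_succ_apply', ih, hσ.engelT_engelTail (by omega)]

lemma engelDigit_engelTail_one (hσ : EngelAdmissible σ) (n : ℕ) :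
    engelDigit (n + 1) (engelTail σ 1) = σ (n + 1) := by
  rw [engelDigit, Nat.add_sub_cancel, hσ.iterate_engelT_engelTail_one, ← Int.ceil_toNat,
    hσ.ceil_inv_engelTail (by omega), Int.toNat_natCast]

lemma exists_prod_mul_engelTail_one_eq (hσ : EngelAdmissible σ) {N : ℕ} (hN : 1 ≤ N) :
    ∃ c : ℕ, (∏ j ∈ Finset.Ico 1 N, (σ j : ℝ)) * engelTail σ 1 = c + engelTail σ N := by
  induction N, hN using Nat.le_induction with
  | base => exact ⟨0, by simp⟩
  | succ N hN ih =>
    obtain ⟨c, hc⟩ := ih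
    refine ⟨σ N * c + 1, ?_⟩
    rw [Finset.prod_Ico_succ_top hN, mul_right_comm, hc, mul_comm, mul_add,
      hσ.natCast_mul_engelTail hN]
    push_cast
    ring

theorem irrational_engelTail_one (hσ : EngelAdmissible σ) : Irrational (engelTail σ 1) := by
  rintro ⟨r, hr⟩
  obtain ⟨N, hN, hNr⟩ := hσ.exists_lt r.den
  obtain ⟨c, hc⟩ := hσ.exists_prod_mul_engelTail_one_eq hN
  have hden : (r.den : ℝ) * r = r.num := by exact_mod_cast r.den_mul_eq_num
  set z : ℤ := (∏ j ∈ Finset.Ico 1 N, σ j : ℕ) * r.num - r.den * c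
  have hz : (z : ℝ) = r.den * engelTail σ N := by
    simp only [z]
    push_cast
    rw [hr] at hden
    linear_combination (r.den : ℝ) * hc - (∏ j ∈ Finset.Ico 1 N, (σ j : ℝ)) * hden
  have hz_pos : (0 : ℝ) < z := hz ▸ mul_pos (by exact_mod_cast r.pos) (hσ.engelTail_pos hN)
  have hz_lt : (z : ℝ) < 1 := by
    have hσN : (r.den : ℝ) + 1 ≤ σ N := by exact_mod_cast hNr
    have hσN' : 0 < (σ N : ℝ) - 1 := by linarith [hσ.two_le_cast hN]
    calc (z : ℝ) = r.den * engelTail σ N := hz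
      _ ≤ ((σ N : ℝ) - 1) * engelTail σ N := by
          gcongr
          · exact (hσ.engelTail_pos hN).le
          · linarith
      _ < ((σ N : ℝ) - 1) * ((σ N : ℝ) - 1)⁻¹ := by gcongr; exact hσ.engelTail_lt hN
      _ = 1 := mul_inv_cancel₀ hσN'.ne'
  have h0 : 0 < z := by exact_mod_cast hz_pos
  have h1 : z < 1 := by exact_mod_cast hz_lt
  omega

end EngelAdmissible

theorem engelTail_one_eq (σ : ℕ → ℕ) :
    engelTail σ 1 = ∑' n : ℕ, (∏ j ∈ Finset.Icc 1 (n + 1), (σ j : ℝ))⁻¹ := by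
  refine tsum_congr fun n => ?_
  rw [← Finset.Ico_add_one_right_eq_Icc, Finset.prod_Ico_eq_prod_range, Nat.add_sub_cancel]

theorem sInf_ofReal_image_Ioi (a : ℝ) : sInf (ENNReal.ofReal '' Ioi a) = ENNReal.ofReal a := by
  rw [← Monotone.map_csInf_of_continuousAt ENNReal.continuous_ofReal.continuousAt
    ENNReal.ofReal_mono nonempty_Ioi bddBelow_Ioi, csInf_Ioi]

theorem engelLambda_eq_of_summable_iff {x α : ℝ} (hα : 0 ≤ α)
    (h : ∀ s, 0 ≤ s → ((Summable fun n : ℕ => (engelDigit (n + 1) x : ℝ) ^ (-s)) ↔ α < s)) :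
    engelLambda x = ENNReal.ofReal α := by
  have hset : {s : ℝ | 0 ≤ s ∧ Summable fun n : ℕ => (engelDigit (n + 1) x : ℝ) ^ (-s)} =
      Ioi α := by
    ext s
    exact ⟨fun ⟨hs, hsum⟩ => (h s hs).1 hsum,
      fun hs => ⟨hα.trans (le_of_lt hs), (h s (hα.trans (le_of_lt hs))).2 hs⟩⟩
  rw [engelLambda, hset, sInf_ofReal_image_Ioi]

/-- `u ≤ ⌈u⌉₊ ≤ 2u` for `u ≥ 1`. -/
theorem summable_natCeil_rpow_neg_iff {u : ℕ → ℝ} (hu : ∀ n, 1 ≤ u n) {s : ℝ} (hs : 0 ≤ s) :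
    (Summable fun n => (⌈u n⌉₊ : ℝ) ^ (-s)) ↔ Summable fun n => u n ^ (-s) := by
  have hu0 n : 0 < u n := zero_lt_one.trans_le (hu n)
  constructor
  · intro hsum
    refine (hsum.mul_left (2 ^ s)).of_nonneg_of_le (fun n => Real.rpow_nonneg (hu0 n).le _)
      fun n => ?_
    have hceil : (⌈u n⌉₊ : ℝ) ≤ 2 * u n := by linarith [Nat.ceil_lt_add_one (hu0 n).le, hu n]
    calc u n ^ (-s) = 2 ^ s * (2 * u n) ^ (-s) := by
          rw [Real.mul_rpow (by norm_num) (hu0 n).le, ← mul_assoc, ← Real.rpow_add (by norm_num),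
            add_neg_cancel, Real.rpow_zero, one_mul]
      _ ≤ 2 ^ s * (⌈u n⌉₊ : ℝ) ^ (-s) := mul_le_mul_of_nonneg_left
          (Real.rpow_le_rpow_of_nonpos (Nat.cast_pos.2 (Nat.ceil_pos.2 (hu0 n))) hceil
            (neg_nonpos.2 hs)) (by positivity)
  · intro hsum
    refine hsum.of_nonneg_of_le (fun n => by positivity) fun n => ?_
    exact Real.rpow_le_rpow_of_nonpos (hu0 n) (Nat.le_ceil _) (neg_nonpos.2 hs)

theorem summable_natCeil_add_two_rpow_inv_rpow_neg_iff {α s : ℝ} (hα : 0 < α) (hs : 0 ≤ s) :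
    (Summable fun n : ℕ => (⌈((n : ℝ) + 2) ^ (1 / α)⌉₊ : ℝ) ^ (-s)) ↔ α < s := by
  have hbase (n : ℕ) : 1 ≤ ((n : ℝ) + 2) ^ (1 / α) :=
    Real.one_le_rpow (by linarith [n.cast_nonneg' (α := ℝ)]) (by positivity)
  rw [summable_natCeil_rpow_neg_iff hbase hs, ← one_lt_div hα,
    ← Real.summable_one_div_nat_add_rpow 2]
  refine summable_congr fun n => ?_
  rw [← Real.rpow_mul (by positivity), abs_of_nonneg (by positivity), one_div (_ ^ _),
    ← Real.rpow_neg (by positivity)]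
  ring_nf

theorem engelAdmissible_of_eq_natCeil_rpow {α : ℝ} (hα : 0 < α) {σ : ℕ → ℕ}
    (hσ : ∀ n, 1 ≤ n → σ n = ⌈((n : ℝ) + 1) ^ (1 / α)⌉₊) : EngelAdmissible σ where
  two_le_one := by
    rw [hσ 1 le_rfl]
    exact Nat.lt_ceil.2 <| by push_cast; exact Real.one_lt_rpow (by norm_num) (by positivity)
  monotoneOn a ha b hb hab := by
    rw [hσ a ha, hσ b hb]
    gcongr
  tendsto_atTop := by
    refine Tendsto.congr' (f₁ := fun n : ℕ => ⌈((n : ℝ) + 1) ^ (1 / α)⌉₊)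
      ((eventually_ge_atTop 1).mono fun n hn => (hσ n hn).symm) ?_
    refine tendsto_nat_ceil_atTop.comp ((tendsto_rpow_atTop (by positivity)).comp ?_)
    exact tendsto_atTop_add_const_right _ 1 tendsto_natCast_atTop_atTop

/-- For `α > 0`, the number `x = Σ_{n≥1} 1/(σ_1⋯σ_n)` with Engel digits
`σ_n = ⌈(n+1)^{1/α}⌉` is irrational and satisfies `λ(x) = α`. -/
theorem engelLambda_of_ceil_rpow_digits (α : ℝ) (hα : 0 < α) (σ : ℕ → ℕ)
    (hσ : ∀ n, 1 ≤ n → σ n = ⌈((n : ℝ) + 1) ^ (1 / α)⌉₊) (x : ℝ)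
    (hx : x = ∑' n : ℕ, (∏ j ∈ Finset.Icc 1 (n + 1), (σ j : ℝ))⁻¹) :
    Irrational x ∧ engelLambda x = ENNReal.ofReal α := by
  have hadm := engelAdmissible_of_eq_natCeil_rpow hα hσ
  rw [← engelTail_one_eq] at hx
  subst hx
  refine ⟨hadm.irrational_engelTail_one, engelLambda_eq_of_summable_iff hα.le fun s hs => ?_⟩
  rw [← summable_natCeil_add_two_rpow_inv_rpow_neg_iff hα hs]
  refine summable_congr fun n => ?_
  rw [hadm.engelDigit_engelTail_one, hσ _ n.succ_pos, Nat.cast_succ, add_assoc, one_add_one_eq_two]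
end

section
/- The function λ : (0,1) → [0,∞] sending x to the exponent of convergence of its Engel digit sequence is discontinuous at every point of (0,1). -/
open Filter MeasureTheory Set
open scoped ENNReal NNReal

/-!
Shifting the digit sequence does not change its exponent of convergence, so `λ ∘ T = λ`.
For `0 ≤ w < 1/(e-1)` the point `(1 + w)/e` is mapped to `w` by `T`; these inverse branches
let us transport points from near `0` into any interval `(a, b) ⊆ [0, 1]`: either some
`1/e` lies in `(a, b)` and a small `w` does, or `(a, b)` lies in one branch, where `T`
stretches it by the factor `e ≥ 2`, and we induct on the length. Hence every set `λ⁻¹' s`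
that accumulates at `0` from the right is dense in `(0, 1)`. Both `{λ = 0} ∋ 0` and
`{λ ≥ 1}`, which contains the points with Engel digits `c, c+1, c+2, …`, are of this kind,
and they are disjoint.
-/

open Topology

section Branches

variable {e : ℕ} {w : ℝ}

lemma ceil_inv_one_add_div (he : 0 < e) (hw0 : 0 ≤ w) (hw : w * (e - 1) < 1) :
    ⌈((1 + w) / e)⁻¹⌉ = e := by
  have he' : (0 : ℝ) < e := by exact_mod_cast he
  rw [inv_div, Int.ceil_eq_iff, lt_div_iff₀ (by linarith), div_le_iff₀ (by linarith)]
  push_cast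
  constructor <;> nlinarith

lemma engelT_one_add_div (he : 0 < e) (hw0 : 0 ≤ w) (hw : w * (e - 1) < 1) :
    engelT ((1 + w) / e) = w := by
  have he' : (e : ℝ) ≠ 0 := by positivity
  rw [engelT, if_neg (by positivity), ceil_inv_one_add_div he hw0 hw]
  push_cast
  field_simp
  ring

lemma engelDigit_one_one_add_div (he : 0 < e) (hw0 : 0 ≤ w) (hw : w * (e - 1) < 1) :
    engelDigit 1 ((1 + w) / e) = e := by
  rw [engelDigit, Nat.sub_self, Function.iterate_zero_apply, ← Int.ceil_toNat,
    ceil_inv_one_add_div he hw0 hw, Int.toNat_natCast]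

end Branches

lemma engelDigit_succ_engelT (n : ℕ) (x : ℝ) :
    engelDigit (n + 1) (engelT x) = engelDigit (n + 1 + 1) x :=
  rfl

lemma engelLambda_engelT (x : ℝ) : engelLambda (engelT x) = engelLambda x := by
  simp only [engelLambda, engelDigit_succ_engelT]
  congr! 4 with s
  exact and_congr_right fun _ =>
    summable_nat_add_iff 1 (f := fun n => (engelDigit (n + 1) x : ℝ) ^ (-s))

lemma engelLambda_zero : engelLambda 0 = 0 := by
  have hdigit (n : ℕ) : engelDigit n 0 = 0 := by
    rw [engelDigit, Function.iterate_fixed (by simp [engelT]), inv_zero, Nat.ceil_zero]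
  refine le_antisymm (ENNReal.le_of_forall_pos_le_add fun ε hε _ => ?_) zero_le
  rw [zero_add, ← ENNReal.ofReal_coe_nnreal]
  refine sInf_le ⟨ε, ⟨ε.2, ?_⟩, rfl⟩
  have hs : -(ε : ℝ) ≠ 0 := neg_ne_zero.mpr (NNReal.coe_ne_zero.mpr hε.ne')
  simp only [hdigit, Nat.cast_zero, Real.zero_rpow hs, summable_zero]

/-- The point whose Engel digits are `c, c+1, c+2, …`. -/
noncomputable def engelStair (c : ℕ) : ℝ := ∑' n : ℕ, ((c.ascFactorial (n + 1) : ℕ) : ℝ)⁻¹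

section EngelStair

variable {c : ℕ}

lemma inv_ascFactorial_le_inv_pow (hc : 0 < c) (n : ℕ) :
    ((c.ascFactorial (n + 1) : ℕ) : ℝ)⁻¹ ≤ ((c : ℝ)⁻¹) ^ (n + 1) := by
  rw [inv_pow]
  gcongr
  exact_mod_cast Nat.pow_succ_le_ascFactorial c (n + 1)

lemma summable_inv_ascFactorial (hc : 2 ≤ c) :
    Summable fun n : ℕ => ((c.ascFactorial (n + 1) : ℕ) : ℝ)⁻¹ := by
  have hc' : (2 : ℝ) ≤ c := by exact_mod_cast hc
  refine .of_nonneg_of_le (fun _ => by positivity) (inv_ascFactorial_le_inv_pow (by omega)) ?_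
  exact (summable_nat_add_iff 1).mpr
    (summable_geometric_of_lt_one (by positivity) (inv_lt_one_of_one_lt₀ (by linarith)))

lemma engelStair_nonneg (c : ℕ) : 0 ≤ engelStair c :=
  tsum_nonneg fun _ => by positivity

lemma engelStair_le (hc : 2 ≤ c) : engelStair c ≤ ((c : ℝ) - 1)⁻¹ := by
  have hc' : (2 : ℝ) ≤ c := by exact_mod_cast hc
  have hr : (c : ℝ)⁻¹ < 1 := inv_lt_one_of_one_lt₀ (by linarith)
  have hgeom : ∑' n : ℕ, ((c : ℝ)⁻¹) ^ (n + 1) = ((c : ℝ) - 1)⁻¹ := by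
    simp_rw [pow_succ']
    rw [tsum_mul_left, tsum_geometric_of_lt_one (by positivity) hr]
    field_simp
  rw [← hgeom]
  exact Summable.tsum_le_tsum (inv_ascFactorial_le_inv_pow (by omega))
    (summable_inv_ascFactorial hc)
    ((summable_nat_add_iff 1).mpr (summable_geometric_of_lt_one (by positivity) hr))

lemma engelStair_eq (hc : 2 ≤ c) : engelStair c = (1 + engelStair (c + 1)) / c := by
  have hshift (n : ℕ) : ((c.ascFactorial (n + 1 + 1) : ℕ) : ℝ)⁻¹ =
      ((c + 1).ascFactorial (n + 1) : ℝ)⁻¹ / c := by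
    rw [Nat.ascFactorial_succ, ← Nat.succ_ascFactorial]
    push_cast
    field_simp
  rw [engelStair, (summable_inv_ascFactorial hc).tsum_eq_zero_add]
  simp only [hshift]
  rw [tsum_div_const, engelStair, add_div, one_div, zero_add]
  simp [Nat.ascFactorial_succ]

lemma engelStair_succ_mul_lt_one (hc : 2 ≤ c) : engelStair (c + 1) * (c - 1) < 1 := by
  have hc' : (2 : ℝ) ≤ c := by exact_mod_cast hc
  calc engelStair (c + 1) * (c - 1) ≤ (c : ℝ)⁻¹ * (c - 1) := by
        gcongr
        · linarith
        · simpa using engelStair_le (c := c + 1) (by omega)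
    _ < 1 := by
        rw [inv_mul_lt_iff₀ (by positivity)]
        linarith

lemma iterate_engelT_engelStair (hc : 2 ≤ c) (n : ℕ) :
    engelT^[n] (engelStair c) = engelStair (c + n) := by
  induction n generalizing c with
  | zero => rfl
  | succ n ih =>
    rw [Function.iterate_succ_apply, engelStair_eq hc,
      engelT_one_add_div (by omega) (engelStair_nonneg _) (engelStair_succ_mul_lt_one hc),
      ih (by omega), add_right_comm, add_assoc]

lemma engelDigit_engelStair (hc : 2 ≤ c) (n : ℕ) :
    engelDigit (n + 1) (engelStair c) = c + n := by
  rw [engelDigit, Nat.add_sub_cancel, iterate_engelT_engelStair hc, engelStair_eq (by omega)]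
  exact engelDigit_one_one_add_div (by omega) (engelStair_nonneg _)
    (engelStair_succ_mul_lt_one (by omega))

lemma one_le_engelLambda_engelStair (hc : 2 ≤ c) : 1 ≤ engelLambda (engelStair c) := by
  refine le_sInf ?_
  rintro _ ⟨s, ⟨-, hs⟩, rfl⟩
  simp only [engelDigit_engelStair hc] at hs
  have : Summable fun n : ℕ => ((n : ℝ)) ^ (-s) :=
    (summable_nat_add_iff c).mp (by simpa [add_comm] using hs)
  rw [← ENNReal.ofReal_one]
  exact ENNReal.ofReal_le_ofReal (by linarith [Real.summable_nat_rpow.mp this])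

lemma exists_engelStair_lt {β : ℝ} (hβ : 0 < β) : ∃ c, 2 ≤ c ∧ engelStair c < β := by
  obtain ⟨c, hc⟩ := exists_nat_gt (β⁻¹ + 2)
  have hβc : β⁻¹ < (c : ℝ) - 1 := by linarith
  have hc2 : 2 ≤ c := by exact_mod_cast (by linarith [inv_pos.mpr hβ] : (2 : ℝ) ≤ c)
  refine ⟨c, hc2, (engelStair_le hc2).trans_lt ?_⟩
  rwa [inv_lt_comm₀ (by linarith [inv_pos.mpr hβ]) hβ]

end EngelStair

lemma exists_nat_one_lt_mul_of_le_one {b : ℝ} (hb0 : 0 < b) (hb1 : b ≤ 1) :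
    ∃ e : ℕ, 2 ≤ e ∧ 1 < e * b ∧ (e - 1) * b ≤ 1 := by
  refine ⟨⌊b⁻¹⌋₊ + 1, ?_, ?_, ?_⟩
  · exact Nat.succ_le_succ (Nat.le_floor (by simpa using one_le_inv_iff₀.mpr ⟨hb0, hb1⟩))
  · have := mul_lt_mul_of_pos_right (Nat.lt_floor_add_one b⁻¹) hb0
    rw [inv_mul_cancel₀ hb0.ne'] at this
    exact_mod_cast this
  · have := mul_le_mul_of_nonneg_right (Nat.floor_le (inv_nonneg.mpr hb0.le)) hb0.le
    rw [inv_mul_cancel₀ hb0.ne'] at this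
    push_cast
    rwa [add_sub_cancel_right]

section Density

variable {S : Set ℝ}

lemma exists_mem_Ioo_of_mem_Ioo_mul_sub_one (hS : engelT ⁻¹' S ⊆ S) {a b : ℝ}
    {e : ℕ} (he : 0 < e) (heb : (e - 1) * b ≤ 1) {w : ℝ} (hw : w ∈ Ioo (e * a - 1) (e * b - 1))
    (hw0 : 0 ≤ w) (hwS : w ∈ S) :
    ∃ y ∈ Ioo a b, y ∈ S := by
  have he' : (0 : ℝ) < e := by exact_mod_cast he
  have hwe : w * (e - 1) < 1 := by nlinarith [hw.2]
  refine ⟨(1 + w) / e, ⟨?_, ?_⟩, hS ?_⟩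
  · rw [lt_div_iff₀ he']; linarith [hw.1]
  · rw [div_lt_iff₀ he']; linarith [hw.2]
  · rwa [mem_preimage, engelT_one_add_div he hw0 hwe]

lemma exists_mem_Ioo_of_engelT_preimage_subset (hS : engelT ⁻¹' S ⊆ S)
    (h0 : ∀ β > 0, ∃ w ∈ S, 0 ≤ w ∧ w < β) {a b : ℝ} (ha : 0 ≤ a) (hab : a < b) (hb : b ≤ 1) :
    ∃ y ∈ Ioo a b, y ∈ S := by
  obtain ⟨k, hk⟩ := pow_unbounded_of_one_lt (b - a)⁻¹ one_lt_two
  rw [inv_lt_iff_one_lt_mul₀ (by linarith)] at hk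
  induction k generalizing a b with
  | zero => rw [pow_zero, one_mul] at hk; linarith
  | succ k ih =>
    obtain ⟨e, he2, hbe, heb⟩ := exists_nat_one_lt_mul_of_le_one (hab.trans_le' ha) hb
    have he2' : (2 : ℝ) ≤ e := by exact_mod_cast he2
    rcases lt_or_ge (e * a - 1) 0 with hlow | hhigh
    · obtain ⟨w, hwS, hw0, hwb⟩ := h0 (e * b - 1) (by linarith)
      exact exists_mem_Ioo_of_mem_Ioo_mul_sub_one hS (by omega) heb ⟨by linarith, hwb⟩ hw0
        hwS
    · obtain ⟨w, hw, hwS⟩ :=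
        ih (a := e * a - 1) (b := e * b - 1) hhigh (by nlinarith) (by linarith)
          (by rw [pow_succ] at hk; nlinarith)
      exact exists_mem_Ioo_of_mem_Ioo_mul_sub_one hS (by omega) heb hw (by linarith [hw.1]) hwS

lemma frequently_mem_of_engelT_preimage_subset (hS : engelT ⁻¹' S ⊆ S)
    (h0 : ∀ β > 0, ∃ w ∈ S, 0 ≤ w ∧ w < β) {x : ℝ} (hx0 : 0 ≤ x) (hx1 : x < 1) :
    ∃ᶠ y in 𝓝 x, y ∈ S := by
  refine frequently_iff.mpr fun hU => ?_
  obtain ⟨u, hxu, hu⟩ := exists_Ico_subset_of_mem_nhds hU ⟨1, hx1⟩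
  obtain ⟨y, hy, hyS⟩ :=
    exists_mem_Ioo_of_engelT_preimage_subset hS h0 hx0 (lt_min hxu hx1) (min_le_right _ _)
  exact ⟨y, hu ⟨hy.1.le, hy.2.trans_le (min_le_left _ _)⟩, hyS⟩

end Density

lemma frequently_engelLambda_mem {s : Set ℝ≥0∞}
    (h0 : ∀ β > 0, ∃ w, 0 ≤ w ∧ w < β ∧ engelLambda w ∈ s) {x : ℝ} (hx0 : 0 ≤ x) (hx1 : x < 1) :
    ∃ᶠ y in 𝓝 x, engelLambda y ∈ s := by
  refine frequently_mem_of_engelT_preimage_subset (S := engelLambda ⁻¹' s)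
    (fun y hy => ?_) (fun β hβ => ?_) hx0 hx1
  · rwa [mem_preimage, ← engelLambda_engelT]
  · obtain ⟨w, hw0, hwβ, hw⟩ := h0 β hβ
    exact ⟨w, hw, hw0, hwβ⟩

/-- The function `λ : (0,1) → [0,∞]` is discontinuous at every point of
`(0,1)`. -/
theorem engelLambda_everywhere_discontinuous :
    ∀ x ∈ Set.Ioo (0 : ℝ) 1,
      ¬ ContinuousWithinAt engelLambda (Set.Ioo (0 : ℝ) 1) x := by
  rintro x ⟨hx0, hx1⟩ hcont
  have hlim := (hcont.continuousAt (Ioo_mem_nhds hx0 hx1)).tendsto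
  rcases eq_or_ne (engelLambda x) 0 with hzero | hne
  · have hsmall : ∀ᶠ y in 𝓝 x, engelLambda y < 1 :=
      hlim.eventually (gt_mem_nhds (hzero ▸ zero_lt_one))
    refine frequently_engelLambda_mem (s := Ici 1) (fun β hβ => ?_) hx0.le hx1
      (hsmall.mono fun y hy => not_le.mpr hy)
    obtain ⟨c, hc, hcβ⟩ := exists_engelStair_lt hβ
    exact ⟨engelStair c, engelStair_nonneg c, hcβ, one_le_engelLambda_engelStair hc⟩
  · exact frequently_engelLambda_mem (s := {0}) (fun _ hβ => ⟨0, le_rfl, hβ, engelLambda_zero⟩)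
      hx0.le hx1 (hlim.eventually_ne hne)
end

section
/- For every α ∈ [0,∞), the set {x ∈ (0,1) : λ(x) ≤ α} is of the first Baire category (meagre) in (0,1). -/
/-!
If `λ(x) < k`, the partial sums of `∑ d_n(x)^{-k}` are bounded, so the set lies in the countable
union of the sets `B_N` where all these partial sums are at most `N`. Each `B_N` is nowhere dense.
On each branch `[1/(r+1), 1/r)` the Engel map is affine of slope `r + 1 ≥ 2`, so iterating it
blows up any open interval until it covers a whole interval `(1/(q+1), 1/q)`. Pulling back a tiny
interval just below the repelling fixed point `1/q` of the branch `y ↦ (q+1) y - 1` gives an open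
set of points whose orbit lingers there for as long as we like, so that their first digits are
all at most `q + 1` and the partial sums exceed `N`.
-/

open Filter MeasureTheory Set
open scoped ENNReal NNReal

open Topology

theorem isNowhereDense_of_forall_mem_nhds {X : Type*} [TopologicalSpace X] {s : Set X}
    (h : ∀ x ∈ s, ∀ U ∈ 𝓝 x, ∃ V ⊆ U, IsOpen V ∧ V.Nonempty ∧ Disjoint V s) :
    IsNowhereDense s := by
  refine isNowhereDense_iff_forall_notMem_nhds.2 fun x hx hcl => ?_
  obtain ⟨V, hVU, hVo, ⟨y, hy⟩, hVs⟩ := h x hx _ hcl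
  exact (hVs.closure_right hVo).notMem_of_mem_left hy (hVU hy)

def OpenlyCovers {X Y : Type*} [TopologicalSpace X] [TopologicalSpace Y]
    (f : X → Y) (U : Set X) (W : Set Y) : Prop :=
  ∀ V ⊆ W, IsOpen V → V.Nonempty → ∃ J ⊆ U, IsOpen J ∧ J.Nonempty ∧ MapsTo f J V

namespace OpenlyCovers

variable {X Y Z : Type*} [TopologicalSpace X] [TopologicalSpace Y] [TopologicalSpace Z]
  {f : X → Y} {g : Y → Z} {U U' : Set X} {V : Set Y} {W : Set Z}

theorem id (h : U' ⊆ U) : OpenlyCovers id U U' :=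
  fun V' hV' hV'o hV'ne => ⟨V', hV'.trans h, hV'o, hV'ne, mapsTo_id V'⟩

theorem of_continuousOn (hU : IsOpen U) (hf : ContinuousOn f U) (hV : V ⊆ f '' U) :
    OpenlyCovers f U V := by
  rintro V' hV' hV'o ⟨y, hy⟩
  obtain ⟨x, hx, rfl⟩ := hV (hV' hy)
  exact ⟨U ∩ f ⁻¹' V', inter_subset_left, hf.isOpen_inter_preimage hU hV'o, ⟨x, hx, hy⟩,
    fun _ hz => hz.2⟩

theorem mono_left (h : OpenlyCovers f U V) (hU : U ⊆ U') : OpenlyCovers f U' V :=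
  fun V' hV' hV'o hV'ne =>
    let ⟨J, hJ, hJo, hJne, hmaps⟩ := h V' hV' hV'o hV'ne
    ⟨J, hJ.trans hU, hJo, hJne, hmaps⟩

theorem comp (hg : OpenlyCovers g V W) (hf : OpenlyCovers f U V) : OpenlyCovers (g ∘ f) U W := by
  intro W' hW' hW'o hW'ne
  obtain ⟨J', hJ', hJ'o, hJ'ne, hg'⟩ := hg W' hW' hW'o hW'ne
  obtain ⟨J, hJ, hJo, hJne, hf'⟩ := hf J' hJ' hJ'o hJ'ne
  exact ⟨J, hJ, hJo, hJne, hg'.comp hf'⟩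

end OpenlyCovers

theorem engelT_eq_of_mem_Ico {r : ℕ} {x : ℝ} (hx : x ∈ Ico ((r + 1 : ℝ)⁻¹) (r : ℝ)⁻¹) :
    engelT x = (r + 1) * x - 1 := by
  have hx0 : 0 < x := (inv_pos.2 (by positivity)).trans_le hx.1
  have hr : (0 : ℝ) < r := inv_pos.1 (hx0.trans hx.2)
  have hceil : ⌈x⁻¹⌉ = (r : ℤ) + 1 := by
    rw [Int.ceil_eq_iff]
    push_cast
    exact ⟨by simpa using (lt_inv_comm₀ hx0 hr).1 hx.2, inv_le_of_inv_le₀ (by positivity) hx.1⟩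
  rw [engelT, if_neg hx0.ne', hceil]
  push_cast
  ring

theorem engelT_nonneg {x : ℝ} (hx : 0 ≤ x) : 0 ≤ engelT x := by
  rcases hx.eq_or_lt with rfl | hx
  · simp [engelT]
  rw [engelT, if_neg hx.ne']
  have := mul_le_mul_of_nonneg_left (Int.le_ceil x⁻¹) hx.le
  rw [mul_inv_cancel₀ hx.ne'] at this
  linarith

theorem engelT_le_self {x : ℝ} (hx : 0 ≤ x) : engelT x ≤ x := by
  rcases hx.eq_or_lt with rfl | hx
  · simp [engelT]
  rw [engelT, if_neg hx.ne']
  have := mul_le_mul_of_nonneg_left (Int.ceil_lt_add_one x⁻¹).le hx.le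
  rw [mul_add, mul_inv_cancel₀ hx.ne'] at this
  linarith

theorem engelT_iterate_nonneg {x : ℝ} (hx : 0 ≤ x) (n : ℕ) : 0 ≤ engelT^[n] x := by
  induction n with
  | zero => exact hx
  | succ n ih => rw [Function.iterate_succ_apply']; exact engelT_nonneg ih

theorem antitone_engelT_iterate {x : ℝ} (hx : 0 ≤ x) : Antitone fun n => engelT^[n] x :=
  antitone_nat_of_succ_le fun n => by
    rw [Function.iterate_succ_apply']
    exact engelT_le_self (engelT_iterate_nonneg hx n)

noncomputable def engelDigitSum (s : ℝ) (M : ℕ) (x : ℝ) : ℝ :=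
  ∑ n ∈ Finset.range M, (engelDigit (n + 1) x : ℝ) ^ (-s)

theorem mul_rpow_neg_le_engelDigitSum {x s : ℝ} {d M : ℕ} (hx : 0 ≤ x) (hs : 0 ≤ s) (hd : 0 < d)
    (hM : (d : ℝ)⁻¹ ≤ engelT^[M] x) : M * (d : ℝ) ^ (-s) ≤ engelDigitSum s M x := by
  have hterm : ∀ n ∈ Finset.range M, (d : ℝ) ^ (-s) ≤ (engelDigit (n + 1) x : ℝ) ^ (-s) := by
    intro n hn
    have hTn : (d : ℝ)⁻¹ ≤ engelT^[n] x :=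
      hM.trans (antitone_engelT_iterate hx (Finset.mem_range.1 hn).le)
    have hTn0 : 0 < engelT^[n] x := (inv_pos.2 (Nat.cast_pos.2 hd)).trans_le hTn
    have hdigit : engelDigit (n + 1) x = ⌈(engelT^[n] x)⁻¹⌉₊ := rfl
    refine Real.rpow_le_rpow_of_nonpos ?_ ?_ (neg_nonpos.2 hs)
    · rw [hdigit]; exact_mod_cast Nat.ceil_pos.2 (inv_pos.2 hTn0)
    · rw [hdigit]; exact_mod_cast Nat.ceil_le.2 (inv_le_of_inv_le₀ (Nat.cast_pos.2 hd) hTn)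
  simpa [engelDigitSum] using Finset.card_nsmul_le_sum _ _ _ hterm

/-- Below the fixed point `1/q` of the branch `y ↦ (q + 1) y - 1`, each step multiplies the
distance to `1/q` by `q + 1`. -/
theorem engelT_iterate_mem_Ioo {q : ℕ} (hq : 0 < q) (j : ℕ) {y : ℝ} (hy : y < (q : ℝ)⁻¹)
    (hj : (q + 1 : ℝ) ^ j * ((q : ℝ)⁻¹ - y) < (q : ℝ)⁻¹ - (q + 1 : ℝ)⁻¹) :
    engelT^[j] y ∈ Ioo ((q + 1 : ℝ)⁻¹) (q : ℝ)⁻¹ := by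
  induction j generalizing y with
  | zero =>
    rw [pow_zero, one_mul] at hj
    exact ⟨by rw [Function.iterate_zero_apply]; linarith, hy⟩
  | succ j ih =>
    have hpow : (1 : ℝ) ≤ (q + 1) ^ (j + 1) := one_le_pow₀ (by linarith [q.cast_nonneg (α := ℝ)])
    have hy' : (q + 1 : ℝ)⁻¹ < y := by nlinarith
    have hdist : (q : ℝ)⁻¹ - engelT y = (q + 1) * ((q : ℝ)⁻¹ - y) := by
      rw [engelT_eq_of_mem_Ico ⟨hy'.le, hy⟩]
      field_simp
      ring
    rw [Function.iterate_succ_apply]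
    refine ih ?_ ?_
    · nlinarith [q.cast_nonneg (α := ℝ)]
    · rw [hdist, ← mul_assoc, ← pow_succ]
      exact hj

theorem openlyCovers_engelT {r : ℕ} {a b : ℝ} (ha : (r + 1 : ℝ)⁻¹ ≤ a) (hb : b ≤ (r : ℝ)⁻¹) :
    OpenlyCovers engelT (Ioo a b) (Ioo ((r + 1) * a - 1) ((r + 1) * b - 1)) := by
  have hr : (0 : ℝ) < r + 1 := by positivity
  have heq : EqOn engelT (fun x => (r + 1) * x - 1) (Ioo a b) := fun x hx =>
    engelT_eq_of_mem_Ico ⟨ha.trans hx.1.le, hx.2.trans_le hb⟩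
  refine .of_continuousOn isOpen_Ioo ((by fun_prop : Continuous _).continuousOn.congr heq) ?_
  rintro y ⟨hy₁, hy₂⟩
  refine ⟨(y + 1) / (r + 1), ⟨?_, ?_⟩, ?_⟩
  · rw [lt_div_iff₀ hr]; linarith
  · rw [div_lt_iff₀ hr]; linarith
  · rw [heq ⟨by rw [lt_div_iff₀ hr]; linarith, by rw [div_lt_iff₀ hr]; linarith⟩]
    field_simp
    ring

/-- The factor `6/5`: when `(a, b)` straddles `1/(r+1)`, its two pieces, of lengths `α` and `β`,
lie on branches of slopes at least `3` and `2`, and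
`max (3α) (2β) ≥ (2/5)·3α + (3/5)·2β = (6/5)(α + β)`. -/
theorem exists_Ioo_subset_or_expanding_branch {a b : ℝ} (ha : 0 ≤ a) (hab : a < b)
    (hb : b ≤ 1) :
    (∃ q : ℕ, 0 < q ∧ Ioo ((q + 1 : ℝ)⁻¹) (q : ℝ)⁻¹ ⊆ Ioo a b) ∨
      ∃ (r : ℕ) (a' b' : ℝ), 0 < r ∧ Ioo a' b' ⊆ Ioo a b ∧ (r + 1 : ℝ)⁻¹ ≤ a' ∧ a' < b' ∧
        b' ≤ (r : ℝ)⁻¹ ∧ 6 / 5 * (b - a) ≤ (r + 1) * (b' - a') := by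
  have hb0 : 0 < b := ha.trans_lt hab
  set r := ⌊b⁻¹⌋₊
  have hr : 0 < r := Nat.floor_pos.2 (one_le_inv₀ hb0 |>.2 hb)
  have hR : (1 : ℝ) ≤ r := by exact_mod_cast hr
  have hrb : (r + 1 : ℝ)⁻¹ < b := inv_lt_of_inv_lt₀ hb0 (Nat.lt_floor_add_one _)
  have hbr : b ≤ (r : ℝ)⁻¹ := (le_inv_comm₀ hb0 (by positivity)).2 (Nat.floor_le (by positivity))
  rcases le_or_gt (r + 1 : ℝ)⁻¹ a with h₁ | h₁
  · exact .inr ⟨r, a, b, hr, subset_rfl, h₁, hab, hbr, by nlinarith⟩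
  rcases le_or_gt a (r + 2 : ℝ)⁻¹ with h₂ | h₂
  · refine .inl ⟨r + 1, r.succ_pos, Ioo_subset_Ioo ?_ (by push_cast; exact hrb.le)⟩
    push_cast
    rwa [add_assoc, one_add_one_eq_two]
  set c := (r + 1 : ℝ)⁻¹
  rcases le_or_gt (6 / 5 * (b - a)) ((r + 2) * (c - a)) with h₃ | h₃
  · refine .inr ⟨r + 1, a, c, r.succ_pos, Ioo_subset_Ioo le_rfl hrb.le, ?_, h₁, ?_, ?_⟩ <;>
      push_cast
    · rw [add_assoc, one_add_one_eq_two]; exact h₂.le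
    · exact le_rfl
    · rwa [add_assoc, one_add_one_eq_two]
  · exact .inr ⟨r, c, b, hr, Ioo_subset_Ioo h₁.le le_rfl, le_rfl, hrb, hbr, by nlinarith⟩

theorem exists_openlyCovers_engelT_iterate_of_pow_le (n : ℕ) {a b : ℝ} (ha : 0 ≤ a)
    (hb : b ≤ 1) (hn : (5 / 6 : ℝ) ^ n ≤ b - a) :
    ∃ m q : ℕ, 0 < q ∧ OpenlyCovers engelT^[m] (Ioo a b) (Ioo ((q + 1 : ℝ)⁻¹) (q : ℝ)⁻¹) := by
  induction n generalizing a b with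
  | zero =>
    refine ⟨0, 1, one_pos, .id (Ioo_subset_Ioo ?_ ?_)⟩ <;> norm_num at hn ⊢ <;> linarith
  | succ n ih =>
    have hab : a < b := by linarith [pow_pos (by norm_num : (0 : ℝ) < 5 / 6) (n + 1)]
    obtain ⟨q, hq, hsub⟩ | ⟨r, a', b', hr, hsub, ha', hab', hb', hgrow⟩ :=
      exists_Ioo_subset_or_expanding_branch ha hab hb
    · exact ⟨0, q, hq, .id hsub⟩
    have hR : (1 : ℝ) ≤ r := by exact_mod_cast hr
    have ha₁ : 0 ≤ (r + 1) * a' - 1 := by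
      have := mul_le_mul_of_nonneg_left ha' (by positivity : (0 : ℝ) ≤ r + 1)
      rw [mul_inv_cancel₀ (by positivity)] at this
      linarith
    have hb₁ : (r + 1) * b' - 1 ≤ 1 := by
      have := mul_le_mul_of_nonneg_left hb' (by positivity : (0 : ℝ) ≤ r + 1)
      have hr₁ : (r + 1 : ℝ) * (r : ℝ)⁻¹ = 1 + (r : ℝ)⁻¹ := by field_simp
      linarith [inv_le_one_of_one_le₀ hR]
    obtain ⟨m, q, hq, hcov⟩ := ih ha₁ hb₁ (by rw [pow_succ] at hn; linarith)
    refine ⟨m + 1, q, hq, ?_⟩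
    rw [Function.iterate_succ]
    exact hcov.comp ((openlyCovers_engelT ha' hb').mono_left hsub)

theorem exists_openlyCovers_engelT_iterate {a b : ℝ} (ha : 0 ≤ a) (hab : a < b) (hb : b ≤ 1) :
    ∃ m q : ℕ, 0 < q ∧ OpenlyCovers engelT^[m] (Ioo a b) (Ioo ((q + 1 : ℝ)⁻¹) (q : ℝ)⁻¹) := by
  obtain ⟨n, hn⟩ := exists_pow_lt_of_lt_one (sub_pos.2 hab) (by norm_num : (5 / 6 : ℝ) < 1)
  exact exists_openlyCovers_engelT_iterate_of_pow_le n ha hb hn.le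

theorem exists_isOpen_forall_lt_engelDigitSum {a b s : ℝ} (ha : 0 ≤ a) (hab : a < b) (hb : b ≤ 1)
    (hs : 0 ≤ s) (N : ℝ) :
    ∃ J ⊆ Ioo a b, IsOpen J ∧ J.Nonempty ∧ ∃ M, ∀ x ∈ J, N < engelDigitSum s M x := by
  obtain ⟨m, q, hq, hcov⟩ := exists_openlyCovers_engelT_iterate ha hab hb
  have hq₀ : (0 : ℝ) < q := Nat.cast_pos.2 hq
  have hq₁ : (0 : ℝ) < q + 1 := by positivity
  obtain ⟨L, hL⟩ := exists_nat_gt (N * (q + 1 : ℝ) ^ s)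
  set δ := (q : ℝ)⁻¹ - (q + 1 : ℝ)⁻¹
  have hδ : 0 < δ := sub_pos.2 (inv_strictAnti₀ hq₀ (lt_add_one _))
  have hpow : (1 : ℝ) ≤ (q + 1) ^ L := one_le_pow₀ (by linarith)
  set u := (q : ℝ)⁻¹ - δ / (q + 1) ^ L
  have hδu : δ / (q + 1) ^ L ≤ δ := div_le_self hδ.le hpow
  have hsub : Ioo u (q : ℝ)⁻¹ ⊆ Ioo ((q + 1 : ℝ)⁻¹) (q : ℝ)⁻¹ :=
    Ioo_subset_Ioo_left (by linarith)
  obtain ⟨J, hJ, hJo, hJne, hmaps⟩ :=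
    hcov _ hsub isOpen_Ioo (nonempty_Ioo.2 (sub_lt_self _ (by positivity)))
  refine ⟨J, hJ, hJo, hJne, L + m, fun x hx => ?_⟩
  have hx₀ : 0 ≤ x := ha.trans (hJ hx).1.le
  obtain ⟨hyu, hyq⟩ := hmaps hx
  have hlinger := engelT_iterate_mem_Ioo hq L hyq (by
    rw [← lt_div_iff₀' (by positivity)]
    linarith)
  rw [← Function.iterate_add_apply] at hlinger
  have hsum := mul_rpow_neg_le_engelDigitSum hx₀ hs (d := q + 1) q.succ_pos
    (by push_cast; exact hlinger.1.le)
  push_cast at hsum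
  have hLN : N < L * (q + 1 : ℝ) ^ (-s) := by
    rw [Real.rpow_neg hq₁.le, ← div_eq_mul_inv, lt_div_iff₀ (by positivity)]
    exact hL
  calc N < L * (q + 1 : ℝ) ^ (-s) := hLN
    _ ≤ (L + m : ℕ) * (q + 1 : ℝ) ^ (-s) := by gcongr; omega
    _ ≤ engelDigitSum s (L + m) x := by exact_mod_cast hsum

theorem isNowhereDense_setOf_forall_engelDigitSum_le {s : ℝ} (hs : 0 ≤ s) (N : ℝ) :
    IsNowhereDense (Ioo 0 1 ∩ {x | ∀ M, engelDigitSum s M x ≤ N}) := by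
  refine isNowhereDense_of_forall_mem_nhds fun x hx U hU => ?_
  obtain ⟨a, b, hxab, hsub⟩ :=
    mem_nhds_iff_exists_Ioo_subset.1 (inter_mem hU (isOpen_Ioo.mem_nhds hx.1))
  have hab : a < b := hxab.1.trans hxab.2
  obtain ⟨ha, hb⟩ := (Ioo_subset_Ioo_iff hab).1 (hsub.trans inter_subset_right)
  obtain ⟨J, hJ, hJo, hJne, M, hM⟩ := exists_isOpen_forall_lt_engelDigitSum ha hab hb hs N
  exact ⟨J, hJ.trans (hsub.trans inter_subset_left), hJo, hJne,
    disjoint_left.2 fun y hyJ hy => (hM y hyJ).not_ge (hy.2 M)⟩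

theorem summable_engelDigit_rpow_neg_of_engelLambda_lt {x s : ℝ}
    (h : engelLambda x < ENNReal.ofReal s) :
    Summable fun n : ℕ => (engelDigit (n + 1) x : ℝ) ^ (-s) := by
  obtain ⟨_, ⟨t, ⟨ht, hsum⟩, rfl⟩, hts⟩ := sInf_lt_iff.1 h
  have hts : t < s := (ENNReal.ofReal_lt_ofReal_iff_of_nonneg ht).1 hts
  refine hsum.of_nonneg_of_le (fun n => by positivity) fun n => ?_
  rcases (engelDigit (n + 1) x).eq_zero_or_pos with h₀ | hpos
  · rw [h₀, Nat.cast_zero, Real.zero_rpow (by linarith)]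
    positivity
  · exact Real.rpow_le_rpow_of_exponent_le (by exact_mod_cast hpos) (by linarith)

theorem exists_forall_engelDigitSum_le_of_engelLambda_lt {x s : ℝ}
    (h : engelLambda x < ENNReal.ofReal s) : ∃ N : ℕ, ∀ M, engelDigitSum s M x ≤ N := by
  obtain ⟨N, hN⟩ := exists_nat_ge (∑' n, (engelDigit (n + 1) x : ℝ) ^ (-s))
  exact ⟨N, fun M => ((summable_engelDigit_rpow_neg_of_engelLambda_lt h).sum_le_tsum _
    fun n _ => by positivity).trans hN⟩

/-- For every `α ∈ [0,∞)`, the set `{x ∈ (0,1) : λ(x) ≤ α}` is meagre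
in `(0,1)`. -/
theorem engelLambda_le_isMeagre (α : ℝ≥0∞) (htop : α ≠ ⊤) :
    IsMeagre {x : Set.Ioo (0 : ℝ) 1 | engelLambda (x : ℝ) ≤ α} := by
  obtain ⟨k, hk⟩ := ENNReal.exists_nat_gt htop
  have hmeagre : IsMeagre (⋃ N : ℕ, Ioo 0 1 ∩ {x | ∀ M, engelDigitSum k M x ≤ N}) :=
    isMeagre_iUnion fun N =>
      (isNowhereDense_setOf_forall_engelDigitSum_le k.cast_nonneg N).isMeagre
  refine (hmeagre.preimage_of_isOpenMap continuous_subtype_val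
    isOpen_Ioo.isOpenMap_subtype_val).mono fun x hx => ?_
  rw [← ENNReal.ofReal_natCast] at hk
  obtain ⟨N, hN⟩ := exists_forall_engelDigitSum_le_of_engelLambda_lt (hx.trans_lt hk)
  exact mem_iUnion.2 ⟨N, x.2, hN⟩
end
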